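/- arXiv:1611.06341 — 2 statements merged into one kernel-verified Lean document; each statement's English description precedes it below -/
import Mathlib

section
/- Let (f_t)_{t∈[0,T]} ∈ L^∞([0,T],𝒫₁(ℝ^d)) be a weak solution of the Fokker–Planck equation. There exists a constant C > 0 such that for all ε ∈ (0,1), all y ∈ ℝ^d and all t ∈ [0,T]: |b^ε(t,y)| + |a^ε(t,y)|^{1/2} + ∫_{ℝ^d} ∫_E |h(t,z,x)| F_t^ε(x,y) μ(dz) f_t(dx) ≤ C(1+|y|). -/
/-!
The regularized coefficients are averages of `b`, `a`, `∫ |h| dμ` against the probability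
kernel `F_t^ε(·, y)`, so by linear growth it suffices to bound the `F_t^ε(·, y)`-averages of
`1 + |x|` and `(1 + |x|)²` by `K (1 + |y|)` and `K (1 + |y|)²`, uniformly in `t` and `ε < 1`.
By Markov's inequality the uniform first-moment bound keeps half of the mass of every `f_t` in a
fixed ball `B(0, R)`, whence `f_t^ε(y) ≳ ε^{-d/2} exp (-(|y| + R)² / (2ε))`. Splitting at
`|x - y|² = 2 (|y| + R)²`, the Gaussian tail of `|x - y|² φ_ε(x - y)` beyond this radius is
dominated by that lower bound, which controls the second moment; the first follows by AM-GM.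
-/

open MeasureTheory Real Set Filter Matrix
open scoped BigOperators ENNReal Topology

noncomputable section

attribute [local instance] Matrix.normedAddCommGroup Matrix.normedSpace

abbrev Vec (d : ℕ) : Type := EuclideanSpace ℝ (Fin d)

variable {d : ℕ} {E : Type*} [MeasurableSpace E]

/-- The diffusion operator `𝒜_s φ(x) = b(s,x)·∇φ(x) + (1/2) Σ_{i,j} a_{ij}(s,x) ∂²_{ij} φ(x)`. -/
def opA (b : ℝ → Vec d → Vec d) (a : ℝ → Vec d → Matrix (Fin d) (Fin d) ℝ)
    (s : ℝ) (φ : Vec d → ℝ) (x : Vec d) : ℝ :=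
  (inner ℝ (b s x) (gradient φ x) : ℝ)
    + (1/2) * ∑ i : Fin d, ∑ j : Fin d, a s x i j *
        (iteratedFDeriv ℝ 2 φ x ![EuclideanSpace.single i 1, EuclideanSpace.single j 1])

/-- The jump operator `ℬ_s φ(x) = ∫_E (φ(x + h(s,z,x)) - φ(x)) μ(dz)`. -/
def opB (μ : Measure E) (h : ℝ → E → Vec d → Vec d) (s : ℝ) (φ : Vec d → ℝ) (x : Vec d) : ℝ :=
  ∫ z, (φ (x + h s z x) - φ x) ∂μ

/-- The growth assumption: `|σ(t,x)| + |b(t,x)| + ∫_E |h(t,z,x)| μ(dz) ≤ C₀ (1+|x|)`. -/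
def GrowthCond (T : ℝ) (μ : Measure E) (σ : ℝ → Vec d → Matrix (Fin d) (Fin d) ℝ)
    (b : ℝ → Vec d → Vec d) (h : ℝ → E → Vec d → Vec d) (C₀ : ℝ) : Prop :=
  ∀ t ∈ Icc (0:ℝ) T, ∀ x : Vec d, ‖σ t x‖ + ‖b t x‖ + (∫ z, ‖h t z x‖ ∂μ) ≤ C₀ * (1 + ‖x‖)

/-- `(f_t)` is a measurable family of measures, for `t ∈ [0,T]`. -/
def MeasFamily (T : ℝ) (f : ℝ → Measure (Vec d)) : Prop :=
  ∀ s : Set (Vec d), MeasurableSet s → Measurable fun t : Icc (0:ℝ) T => f t s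

/-- `(f_t)_{t ∈ [0,T]}` is a weak solution of the Fokker-Planck equation
`∂_t f = -div(b f) + (1/2) Σ ∂_{ij}(a_{ij} f) + ℒ f`. -/
def IsWeakSol (T : ℝ) (μ : Measure E) (b : ℝ → Vec d → Vec d)
    (a : ℝ → Vec d → Matrix (Fin d) (Fin d) ℝ) (h : ℝ → E → Vec d → Vec d)
    (f : ℝ → Measure (Vec d)) : Prop :=
  MeasFamily T f ∧ (∀ t ∈ Icc (0:ℝ) T, IsProbabilityMeasure (f t)) ∧
  ∀ φ : Vec d → ℝ, ContDiff ℝ 2 φ → HasCompactSupport φ → ∀ t ∈ Icc (0:ℝ) T,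
    ∫ x, φ x ∂(f t) = (∫ x, φ x ∂(f 0))
      + ∫ s in (0:ℝ)..t, ∫ x, (opA b a s φ x + opB μ h s φ x) ∂(f s)

/-- Uniformly bounded first moments: `(f_t) ∈ L^∞([0,T], 𝒫₁(ℝ^d))`. -/
def FinFirstMoments (T : ℝ) (f : ℝ → Measure (Vec d)) : Prop :=
  ∃ M : ℝ, ∀ t ∈ Icc (0:ℝ) T, ∫⁻ x, ‖x‖₊ ∂(f t) ≤ ENNReal.ofReal M

/-- The centered Gaussian density with covariance `ε Id`. -/
def gauss (d : ℕ) (ε : ℝ) (x : Vec d) : ℝ :=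
  (2 * π * ε) ^ (-(d:ℝ)/2) * Real.exp (-‖x‖^2 / (2*ε))

/-- `f_t^ε(y) = (f_t ⋆ φ_ε)(y)`. -/
def freg (f : ℝ → Measure (Vec d)) (ε t : ℝ) (y : Vec d) : ℝ :=
  ∫ x, gauss d ε (x - y) ∂(f t)

/-- `a^ε(t,y) = (f_t^ε(y))⁻¹ ∫ φ_ε(x-y) a(t,x) f_t(dx)`. -/
def areg (f : ℝ → Measure (Vec d)) (a : ℝ → Vec d → Matrix (Fin d) (Fin d) ℝ)
    (ε t : ℝ) (y : Vec d) : Matrix (Fin d) (Fin d) ℝ :=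
  Matrix.of fun i j => (freg f ε t y)⁻¹ * ∫ x, gauss d ε (x - y) * a t x i j ∂(f t)

/-- `b^ε(t,y) = (f_t^ε(y))⁻¹ ∫ φ_ε(x-y) b(t,x) f_t(dx)`. -/
def breg (f : ℝ → Measure (Vec d)) (b : ℝ → Vec d → Vec d) (ε t : ℝ) (y : Vec d) : Vec d :=
  (freg f ε t y)⁻¹ • ∫ x, gauss d ε (x - y) • b t x ∂(f t)

/-- `F_t^ε(x,y) = φ_ε(x-y) / f_t^ε(y)`. -/
def Freg (f : ℝ → Measure (Vec d)) (ε t : ℝ) (x y : Vec d) : ℝ :=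
  gauss d ε (x - y) / freg f ε t y

/-- The regularized jump operator `ℬ_{t,ε}`. -/
def opBreg (μ : Measure E) (h : ℝ → E → Vec d → Vec d) (f : ℝ → Measure (Vec d))
    (ε t : ℝ) (ψ : Vec d → ℝ) (y : Vec d) : ℝ :=
  ∫ z, ∫ x, (ψ (y + h t z x) - ψ y) * Freg f ε t x y ∂(f t) ∂μ


/-- Entrywise measurability of a matrix-valued coefficient. -/
def MeasurableMat {d : ℕ} (σ : ℝ → Vec d → Matrix (Fin d) (Fin d) ℝ) : Prop :=
  ∀ i j : Fin d, Measurable fun p : ℝ × Vec d => σ p.1 p.2 i j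

lemma mul_exp_neg_div_le {r c : ℝ} (hc : 0 < c) : r * Real.exp (-r / c) ≤ c := by
  have h := Real.mul_exp_neg_le_exp_neg_one (r / c)
  have h1 : Real.exp (-1) ≤ 1 := Real.exp_le_one_iff.2 (by norm_num)
  calc r * Real.exp (-r / c) = c * (r / c * Real.exp (-(r / c))) := by
        rw [neg_div]; field_simp
    _ ≤ c := mul_le_of_le_one_right hc.le (h.trans h1)

/-- AM-GM: `s ≤ (a + s ^ 2 / a) / 2`. -/
lemma integral_mul_le_of_integral_mul_sq_le {α : Type*} [MeasurableSpace α] {ν : Measure α}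
    {w s : α → ℝ} {a K : ℝ} (ha : 0 < a) (hw : 0 ≤ w) (hs : 0 ≤ s) (hwi : Integrable w ν)
    (hwsi : Integrable (fun x => w x * s x ^ 2) ν)
    (hK : ∫ x, w x * s x ^ 2 ∂ν ≤ K * a ^ 2 * ∫ x, w x ∂ν) :
    ∫ x, w x * s x ∂ν ≤ (1 + K) / 2 * a * ∫ x, w x ∂ν := by
  have hpt : ∀ x, w x * s x ≤ a / 2 * w x + (2 * a)⁻¹ * (w x * s x ^ 2) := by
    intro x
    have h : 2 * a * s x ≤ a ^ 2 + s x ^ 2 := by nlinarith [sq_nonneg (a - s x)]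
    have := mul_le_mul_of_nonneg_left h (hw x)
    rw [← sub_nonneg] at this ⊢
    have e : a / 2 * w x + (2 * a)⁻¹ * (w x * s x ^ 2) - w x * s x
        = (2 * a)⁻¹ * (w x * (a ^ 2 + s x ^ 2) - w x * (2 * a * s x)) := by
      field_simp
    rw [e]; positivity
  have h := integral_mono_of_nonneg (ae_of_all _ fun x => mul_nonneg (hw x) (hs x))
    ((hwi.const_mul _).add (hwsi.const_mul _)) (ae_of_all _ hpt)
  simp only [Pi.add_apply] at h
  rw [integral_add (hwi.const_mul _) (hwsi.const_mul _), integral_const_mul,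
    integral_const_mul] at h
  have : (2 * a)⁻¹ * ∫ x, w x * s x ^ 2 ∂ν ≤ (2 * a)⁻¹ * (K * a ^ 2 * ∫ x, w x ∂ν) :=
    mul_le_mul_of_nonneg_left hK (by positivity)
  calc _ ≤ _ := h
    _ ≤ a / 2 * ∫ x, w x ∂ν + (2 * a)⁻¹ * (K * a ^ 2 * ∫ x, w x ∂ν) := by linarith
    _ = (1 + K) / 2 * a * ∫ x, w x ∂ν := by field_simp

lemma norm_inv_integral_smul_integral_smul_le {α F : Type*} [MeasurableSpace α]
    [NormedAddCommGroup F] [NormedSpace ℝ F] {ν : Measure α} {w ψ : α → ℝ} {φ : α → F}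
    {C K : ℝ} (hw : 0 ≤ w) (hwψ : Integrable (fun x => w x * ψ x) ν)
    (hφ : ∀ x, ‖φ x‖ ≤ C * ψ x) (hC : 0 ≤ C) (hK : ∫ x, w x * ψ x ∂ν ≤ K * ∫ x, w x ∂ν)
    (hpos : 0 < ∫ x, w x ∂ν) :
    ‖(∫ x, w x ∂ν)⁻¹ • ∫ x, w x • φ x ∂ν‖ ≤ C * K := by
  have h : ‖∫ x, w x • φ x ∂ν‖ ≤ C * ∫ x, w x * ψ x ∂ν := by
    rw [← integral_const_mul]
    refine (norm_integral_le_integral_norm _).trans (integral_mono_of_nonneg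
      (ae_of_all _ fun x => norm_nonneg _) (hwψ.const_mul C) (ae_of_all _ fun x => ?_))
    simp only [norm_smul, Real.norm_of_nonneg (hw x)]
    nlinarith [mul_le_mul_of_nonneg_left (hφ x) (hw x)]
  rw [norm_smul, Real.norm_of_nonneg (inv_nonneg.2 hpos.le), inv_mul_le_iff₀ hpos]
  nlinarith [mul_le_mul_of_nonneg_left hK hC]

lemma Matrix.norm_mul_transpose_apply_le {m n : Type*} [Fintype m] [Fintype n]
    (A : Matrix m n ℝ) (i j : m) : ‖(A * Aᵀ) i j‖ ≤ Fintype.card n * ‖A‖ ^ 2 := by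
  rw [Matrix.mul_apply]
  refine (norm_sum_le _ _).trans ?_
  calc ∑ k, ‖A i k * Aᵀ k j‖ ≤ ∑ _k : n, ‖A‖ ^ 2 := by
        refine Finset.sum_le_sum fun k _ => (norm_mul_le _ _).trans ?_
        rw [sq, Matrix.transpose_apply]
        exact mul_le_mul (norm_entry_le_entrywise_sup_norm A)
          (norm_entry_le_entrywise_sup_norm A) (norm_nonneg _) (norm_nonneg _)
    _ = Fintype.card n * ‖A‖ ^ 2 := by simp

section Gaussian

variable {d : ℕ} {ε : ℝ}

lemma gauss_pos (hε : 0 < ε) (u : Vec d) : 0 < gauss d ε u := by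
  unfold gauss; positivity

lemma gauss_le (hε : 0 < ε) (u : Vec d) : gauss d ε u ≤ (2 * π * ε) ^ (-(d:ℝ)/2) := by
  unfold gauss
  refine mul_le_of_le_one_right (by positivity) (Real.exp_le_one_iff.2 ?_)
  have : 0 ≤ ‖u‖ ^ 2 / (2 * ε) := by positivity
  rw [neg_div]; linarith

@[fun_prop]
lemma continuous_gauss : Continuous (gauss d ε) := by
  unfold gauss; fun_prop

lemma gauss_ge_of_norm_le (hε : 0 < ε) {u : Vec d} {s : ℝ} (hus : ‖u‖ ≤ s) :
    (2 * π * ε) ^ (-(d:ℝ)/2) * Real.exp (-s ^ 2 / (2 * ε)) ≤ gauss d ε u := by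
  unfold gauss
  gcongr

/-- Beyond `‖u‖ ^ 2 = a`, half of the Gaussian exponent absorbs the factor `‖u‖ ^ 2`. -/
lemma gauss_mul_norm_sq_le (hε : 0 < ε) {a : ℝ} (ha : 0 ≤ a) (u : Vec d) :
    gauss d ε u * ‖u‖ ^ 2
      ≤ a * gauss d ε u + 4 * ε * (2 * π * ε) ^ (-(d:ℝ)/2) * Real.exp (-a / (4 * ε)) := by
  have hc : 0 < (2 * π * ε) ^ (-(d:ℝ)/2) := by positivity
  have hg := gauss_pos hε u
  rcases le_or_gt (‖u‖ ^ 2) a with hu | hu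
  · have : 0 < 4 * ε * (2 * π * ε) ^ (-(d:ℝ)/2) * Real.exp (-a / (4 * ε)) := by positivity
    nlinarith
  · have hsplit : Real.exp (-‖u‖ ^ 2 / (2 * ε))
        = Real.exp (-‖u‖ ^ 2 / (4 * ε)) * Real.exp (-‖u‖ ^ 2 / (4 * ε)) := by
      rw [← Real.exp_add]; congr 1; field_simp; ring
    have htail : Real.exp (-‖u‖ ^ 2 / (4 * ε)) ≤ Real.exp (-a / (4 * ε)) := by
      gcongr
    have hpeak := mul_exp_neg_div_le (r := ‖u‖ ^ 2) (by positivity : 0 < 4 * ε)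
    calc gauss d ε u * ‖u‖ ^ 2
        = (2 * π * ε) ^ (-(d:ℝ)/2) * Real.exp (-‖u‖ ^ 2 / (4 * ε))
            * (‖u‖ ^ 2 * Real.exp (-‖u‖ ^ 2 / (4 * ε))) := by
          rw [gauss, hsplit]; ring
      _ ≤ (2 * π * ε) ^ (-(d:ℝ)/2) * Real.exp (-a / (4 * ε)) * (4 * ε) := by gcongr
      _ ≤ a * gauss d ε u + 4 * ε * (2 * π * ε) ^ (-(d:ℝ)/2) * Real.exp (-a / (4 * ε)) := by
          nlinarith [mul_nonneg ha hg.le]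

lemma gauss_sub_mul_one_add_norm_sq_le (hε : 0 < ε) {a : ℝ} (ha : 0 ≤ a) (x y : Vec d) :
    gauss d ε (x - y) * (1 + ‖x‖) ^ 2
      ≤ (2 * (1 + ‖y‖) ^ 2 + 2 * a) * gauss d ε (x - y)
        + 8 * ε * (2 * π * ε) ^ (-(d:ℝ)/2) * Real.exp (-a / (4 * ε)) := by
  have hg := gauss_pos hε (x - y)
  have htri : (1 + ‖x‖) ^ 2 ≤ 2 * (1 + ‖y‖) ^ 2 + 2 * ‖x - y‖ ^ 2 := by
    have hx : 1 + ‖x‖ ≤ (1 + ‖y‖) + ‖x - y‖ := by linarith [norm_le_norm_add_norm_sub' x y]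
    nlinarith [pow_le_pow_left₀ (by positivity) hx 2, sq_nonneg (1 + ‖y‖ - ‖x - y‖)]
  nlinarith [gauss_mul_norm_sq_le hε ha (x - y), mul_le_mul_of_nonneg_left htri hg.le]

end Gaussian

section WeightedMoments

variable {d : ℕ} {ν : Measure (Vec d)} {ε R : ℝ}

lemma integrable_gauss_sub [IsFiniteMeasure ν] (hε : 0 < ε) (y : Vec d) :
    Integrable (fun x => gauss d ε (x - y)) ν :=
  (integrable_const _).mono' (by fun_prop)
    (ae_of_all _ fun x => by rw [Real.norm_of_nonneg (gauss_pos hε _).le]; exact gauss_le hε _)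

lemma integrable_gauss_sub_mul_one_add_norm_sq [IsFiniteMeasure ν] (hε : 0 < ε) (y : Vec d) :
    Integrable (fun x => gauss d ε (x - y) * (1 + ‖x‖) ^ 2) ν := by
  refine Integrable.mono' (integrable_const
    (2 * (1 + ‖y‖) ^ 2 * (2 * π * ε) ^ (-(d:ℝ)/2) + 8 * ε * (2 * π * ε) ^ (-(d:ℝ)/2)))
    (by fun_prop) (ae_of_all _ fun x => ?_)
  have h := gauss_sub_mul_one_add_norm_sq_le hε le_rfl x y
  rw [neg_zero, zero_div, Real.exp_zero] at h
  rw [Real.norm_of_nonneg (by have := gauss_pos hε (x - y); positivity)]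
  nlinarith [gauss_le hε (x - y)]

lemma integrable_gauss_sub_mul_one_add_norm [IsFiniteMeasure ν] (hε : 0 < ε) (y : Vec d) :
    Integrable (fun x => gauss d ε (x - y) * (1 + ‖x‖)) ν := by
  refine (integrable_gauss_sub_mul_one_add_norm_sq hε y).mono' (by fun_prop)
    (ae_of_all _ fun x => ?_)
  have hg := gauss_pos hε (x - y)
  have hx : 1 + ‖x‖ ≤ (1 + ‖x‖) ^ 2 := by nlinarith [norm_nonneg x]
  rw [Real.norm_of_nonneg (by positivity)]
  exact mul_le_mul_of_nonneg_left hx hg.le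

lemma measureReal_closedBall_ge_half [IsProbabilityMeasure ν] (hR : 0 < R)
    (hmom : ∫⁻ x, ‖x‖₊ ∂ν ≤ ENNReal.ofReal (R / 2)) :
    1 / 2 ≤ ν.real (Metric.closedBall 0 R) := by
  have hmarkov : ν {x | ENNReal.ofReal R ≤ ‖x‖₊} ≤ 1 / 2 := by
    refine (meas_ge_le_lintegral_div (by fun_prop) (by simpa using hR)
      ENNReal.ofReal_ne_top).trans ?_
    rw [ENNReal.div_le_iff (by simpa using hR) ENNReal.ofReal_ne_top]
    rw [div_eq_inv_mul, ENNReal.ofReal_mul (by norm_num)] at hmom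
    simpa using hmom
  have hcompl : (Metric.closedBall (0 : Vec d) R)ᶜ ⊆ {x | ENNReal.ofReal R ≤ ‖x‖₊} := by
    intro x hx
    simp only [mem_compl_iff, Metric.mem_closedBall, dist_zero_right, not_le] at hx
    simpa [← ofReal_norm', enorm_eq_nnnorm] using ENNReal.ofReal_le_ofReal hx.le
  have hsmall : ν.real (Metric.closedBall (0 : Vec d) R)ᶜ ≤ 1 / 2 := by
    refine (measureReal_mono hcompl).trans ?_
    simpa [measureReal_def] using ENNReal.toReal_mono (by norm_num) hmarkov
  rw [measureReal_compl measurableSet_closedBall, probReal_univ] at hsmall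
  linarith

lemma integral_gauss_sub_ge [IsFiniteMeasure ν] (hε : 0 < ε)
    (hR : 1 / 2 ≤ ν.real (Metric.closedBall 0 R)) (y : Vec d) :
    (2 * π * ε) ^ (-(d:ℝ)/2) * Real.exp (-(‖y‖ + R) ^ 2 / (2 * ε))
      ≤ 2 * ∫ x, gauss d ε (x - y) ∂ν := by
  set κ := (2 * π * ε) ^ (-(d:ℝ)/2) * Real.exp (-(‖y‖ + R) ^ 2 / (2 * ε))
  have hκ : 0 < κ := by positivity
  have hind : ∫ x, (Metric.closedBall 0 R).indicator (fun _ => κ) x ∂ν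
      ≤ ∫ x, gauss d ε (x - y) ∂ν := by
    refine integral_mono_of_nonneg (ae_of_all _ fun x => indicator_nonneg (fun _ _ => hκ.le) x)
      (integrable_gauss_sub hε y) (ae_of_all _ fun x => ?_)
    by_cases hx : x ∈ Metric.closedBall 0 R
    · rw [indicator_of_mem hx]
      rw [Metric.mem_closedBall, dist_zero_right] at hx
      exact gauss_ge_of_norm_le hε ((norm_sub_le x y).trans (by linarith))
    · rw [indicator_of_notMem hx]
      exact (gauss_pos hε _).le
  rw [integral_indicator_const _ measurableSet_closedBall, smul_eq_mul] at hind
  nlinarith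

lemma integral_gauss_sub_pos [IsFiniteMeasure ν] (hε : 0 < ε)
    (hball : 1 / 2 ≤ ν.real (Metric.closedBall 0 R)) (y : Vec d) :
    0 < ∫ x, gauss d ε (x - y) ∂ν := by
  have := integral_gauss_sub_ge hε hball y
  have : 0 < (2 * π * ε) ^ (-(d:ℝ)/2) * Real.exp (-(‖y‖ + R) ^ 2 / (2 * ε)) := by positivity
  linarith

lemma integral_gauss_sub_mul_one_add_norm_sq_le [IsProbabilityMeasure ν] (hε : 0 < ε)
    (hε1 : ε ≤ 1) (hR : 0 ≤ R)
    (hball : 1 / 2 ≤ ν.real (Metric.closedBall 0 R)) (y : Vec d) :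
    ∫ x, gauss d ε (x - y) * (1 + ‖x‖) ^ 2 ∂ν
      ≤ (18 + 4 * (1 + R) ^ 2) * (1 + ‖y‖) ^ 2 * ∫ x, gauss d ε (x - y) ∂ν := by
  set G := ∫ x, gauss d ε (x - y) ∂ν
  set c := (2 * π * ε) ^ (-(d:ℝ)/2)
  set a := 2 * (‖y‖ + R) ^ 2
  have hgi := integrable_gauss_sub (ν := ν) hε y
  have hsplit : ∫ x, gauss d ε (x - y) * (1 + ‖x‖) ^ 2 ∂ν
      ≤ (2 * (1 + ‖y‖) ^ 2 + 2 * a) * G + 8 * ε * c * Real.exp (-a / (4 * ε)) := by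
    have h := integral_mono_of_nonneg
      (ae_of_all _ fun x => by have := gauss_pos hε (x - y); positivity)
      ((hgi.const_mul _).add (integrable_const _))
      (ae_of_all _ fun x => gauss_sub_mul_one_add_norm_sq_le hε (by positivity : 0 ≤ a) x y)
    simp only [Pi.add_apply] at h
    rwa [integral_add (hgi.const_mul _) (integrable_const _), integral_const_mul,
      integral_const, probReal_univ, one_smul] at h
  -- for this `a` the tail term is exactly the lower bound of `integral_gauss_sub_ge`
  have htail : c * Real.exp (-a / (4 * ε)) ≤ 2 * G := by
    have : -a / (4 * ε) = -(‖y‖ + R) ^ 2 / (2 * ε) := by field_simp; ring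
    rw [this]
    exact integral_gauss_sub_ge hε hball y
  have hG : 0 ≤ G := integral_nonneg fun x => (gauss_pos hε _).le
  have hyR : ‖y‖ + R ≤ (1 + R) * (1 + ‖y‖) := by nlinarith [norm_nonneg y]
  have ha : a ≤ 2 * (1 + R) ^ 2 * (1 + ‖y‖) ^ 2 := by
    nlinarith [pow_le_pow_left₀ (by positivity) hyR 2]
  have hy1 : 1 ≤ (1 + ‖y‖) ^ 2 := one_le_pow₀ (by linarith [norm_nonneg y])
  nlinarith [mul_le_mul_of_nonneg_right ha hG, mul_le_mul_of_nonneg_right hy1 hG,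
    mul_le_mul_of_nonneg_left htail (by positivity : (0:ℝ) ≤ 8 * ε)]

end WeightedMoments

section Growth

variable {d : ℕ} {E : Type*} [MeasurableSpace E] {T C₀ t : ℝ} {μ : Measure E}
  {σ : ℝ → Vec d → Matrix (Fin d) (Fin d) ℝ} {b : ℝ → Vec d → Vec d} {h : ℝ → E → Vec d → Vec d}

lemma GrowthCond.le (hg : GrowthCond T μ σ b h C₀) (ht : t ∈ Icc 0 T) (x : Vec d) :
    ‖σ t x‖ ≤ C₀ * (1 + ‖x‖) ∧ ‖b t x‖ ≤ C₀ * (1 + ‖x‖) ∧ ∫ z, ‖h t z x‖ ∂μ ≤ C₀ * (1 + ‖x‖) := by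
  have hx := hg t ht x
  have hh : 0 ≤ ∫ z, ‖h t z x‖ ∂μ := integral_nonneg fun z => norm_nonneg _
  refine ⟨?_, ?_, ?_⟩ <;> linarith [norm_nonneg (σ t x), norm_nonneg (b t x)]

lemma GrowthCond.nonneg (hT : 0 ≤ T) (hg : GrowthCond T μ σ b h C₀) : 0 ≤ C₀ := by
  simpa using (norm_nonneg _).trans (hg.le ⟨le_rfl, hT⟩ (0 : Vec d)).2.1

end Growth

section Regularized

variable {d : ℕ} {f : ℝ → Measure (Vec d)} {ε t C₀ K : ℝ} {y : Vec d}

lemma norm_breg_le {b : ℝ → Vec d → Vec d} (hε : 0 < ε) (hC₀ : 0 ≤ C₀)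
    (hb : ∀ x, ‖b t x‖ ≤ C₀ * (1 + ‖x‖))
    (hint : Integrable (fun x => gauss d ε (x - y) * (1 + ‖x‖)) (f t))
    (hK : ∫ x, gauss d ε (x - y) * (1 + ‖x‖) ∂(f t) ≤ K * (1 + ‖y‖) * freg f ε t y)
    (hG : 0 < freg f ε t y) :
    ‖breg f b ε t y‖ ≤ C₀ * (K * (1 + ‖y‖)) :=
  norm_inv_integral_smul_integral_smul_le (fun _ => (gauss_pos hε _).le) hint hb hC₀ hK hG

lemma sqrt_norm_areg_le {σ : ℝ → Vec d → Matrix (Fin d) (Fin d) ℝ} (hε : 0 < ε)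
    (hσ : ∀ x, ‖σ t x‖ ≤ C₀ * (1 + ‖x‖))
    (hint : Integrable (fun x => gauss d ε (x - y) * (1 + ‖x‖) ^ 2) (f t))
    (hK : ∫ x, gauss d ε (x - y) * (1 + ‖x‖) ^ 2 ∂(f t) ≤ K * (1 + ‖y‖) ^ 2 * freg f ε t y)
    (hG : 0 < freg f ε t y) :
    √‖areg f (fun t x => σ t x * (σ t x)ᵀ) ε t y‖ ≤ √(d * C₀ ^ 2 * K) * (1 + ‖y‖) := by
  have hK0 : 0 ≤ K * (1 + ‖y‖) ^ 2 := nonneg_of_mul_nonneg_left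
    ((integral_nonneg fun x => by have := gauss_pos hε (x - y); positivity).trans hK) hG
  have hentry : ∀ x i j, ‖(σ t x * (σ t x)ᵀ) i j‖ ≤ d * C₀ ^ 2 * (1 + ‖x‖) ^ 2 := fun x i j =>
    calc _ ≤ d * ‖σ t x‖ ^ 2 := by simpa using Matrix.norm_mul_transpose_apply_le (σ t x) i j
      _ ≤ d * (C₀ * (1 + ‖x‖)) ^ 2 := by gcongr; exact hσ x
      _ = d * C₀ ^ 2 * (1 + ‖x‖) ^ 2 := by ring
  have hnorm : ‖areg f (fun t x => σ t x * (σ t x)ᵀ) ε t y‖ ≤ d * C₀ ^ 2 * (K * (1 + ‖y‖) ^ 2) :=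
    (Matrix.norm_le_iff (by positivity)).2 fun i j =>
      norm_inv_integral_smul_integral_smul_le (fun x => (gauss_pos hε _).le) hint
        (fun x => hentry x i j) (by positivity) hK hG
  calc _ ≤ √(d * C₀ ^ 2 * K * (1 + ‖y‖) ^ 2) := Real.sqrt_le_sqrt (by linarith)
    _ = √(d * C₀ ^ 2 * K) * (1 + ‖y‖) := by
      rw [Real.sqrt_mul' _ (by positivity), Real.sqrt_sq (by positivity)]

lemma integral_integral_norm_mul_Freg_le {E : Type*} [MeasurableSpace E] {μ : Measure E}
    {h : ℝ → E → Vec d → Vec d} (hε : 0 < ε) (hC₀ : 0 ≤ C₀)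
    (hh : ∀ x, ∫ z, ‖h t z x‖ ∂μ ≤ C₀ * (1 + ‖x‖))
    (hint : Integrable (fun x => gauss d ε (x - y) * (1 + ‖x‖)) (f t))
    (hK : ∫ x, gauss d ε (x - y) * (1 + ‖x‖) ∂(f t) ≤ K * (1 + ‖y‖) * freg f ε t y)
    (hG : 0 < freg f ε t y) :
    ∫ x, ∫ z, ‖h t z x‖ * Freg f ε t x y ∂μ ∂(f t) ≤ C₀ * (K * (1 + ‖y‖)) := by
  have hrw : (fun x => ∫ z, ‖h t z x‖ * Freg f ε t x y ∂μ)
      = fun x => (freg f ε t y)⁻¹ * (gauss d ε (x - y) * ∫ z, ‖h t z x‖ ∂μ) := by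
    funext x
    rw [integral_mul_const, Freg]
    ring
  rw [hrw, integral_const_mul]
  have hφ : ∀ x, ‖∫ z, ‖h t z x‖ ∂μ‖ ≤ C₀ * (1 + ‖x‖) := fun x => by
    rw [Real.norm_of_nonneg (integral_nonneg fun z => norm_nonneg _)]
    exact hh x
  simpa only [smul_eq_mul, Real.norm_eq_abs, freg] using (le_abs_self _).trans
    (norm_inv_integral_smul_integral_smul_le (fun _ => (gauss_pos hε _).le) hint hφ hC₀ hK hG)

end Regularized

theorem stmt4_general (T : ℝ) (hT : 0 < T) (μ : Measure E)
    (σ : ℝ → Vec d → Matrix (Fin d) (Fin d) ℝ) (b : ℝ → Vec d → Vec d)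
    (h : ℝ → E → Vec d → Vec d) (C₀ : ℝ)
    (hgrowth : GrowthCond T μ σ b h C₀)
    (f : ℝ → Measure (Vec d))
    (hf : IsWeakSol T μ b (fun t x => σ t x * (σ t x)ᵀ) h f)
    (hfm : FinFirstMoments T f) :
    ∃ C > (0:ℝ), ∀ ε ∈ Ioo (0:ℝ) 1, ∀ y : Vec d, ∀ t ∈ Icc (0:ℝ) T,
      ‖breg f b ε t y‖ + Real.sqrt ‖areg f (fun t x => σ t x * (σ t x)ᵀ) ε t y‖
        + (∫ x, ∫ z, ‖h t z x‖ * Freg f ε t x y ∂μ ∂(f t))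
        ≤ C * (1 + ‖y‖) := by
  obtain ⟨-, hprob, -⟩ := hf
  obtain ⟨M, hM⟩ := hfm
  have hC₀ := hgrowth.nonneg hT.le
  set R : ℝ := 2 * (|M| + 1)
  set K : ℝ := 18 + 4 * (1 + R) ^ 2
  refine ⟨C₀ * (1 + K) + √(d * C₀ ^ 2 * K) + 1, by positivity, fun ε ⟨hε, hε1⟩ y t ht => ?_⟩
  have := hprob t ht
  have hball : 1 / 2 ≤ (f t).real (Metric.closedBall 0 R) :=
    measureReal_closedBall_ge_half (by positivity)
      ((hM t ht).trans (ENNReal.ofReal_le_ofReal (by linarith [le_abs_self M])))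
  have hG : 0 < freg f ε t y := integral_gauss_sub_pos hε hball y
  have hK₂ := integral_gauss_sub_mul_one_add_norm_sq_le hε hε1.le (by positivity) hball y
  have hK₁ := integral_mul_le_of_integral_mul_sq_le (by positivity : 0 < 1 + ‖y‖)
    (fun x => (gauss_pos hε (x - y)).le) (fun x => by positivity) (integrable_gauss_sub hε y)
    (integrable_gauss_sub_mul_one_add_norm_sq hε y) hK₂
  have hint₁ := integrable_gauss_sub_mul_one_add_norm (ν := f t) hε y
  have hb := norm_breg_le hε hC₀ (fun x => (hgrowth.le ht x).2.1) hint₁ hK₁ hG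
  have ha := sqrt_norm_areg_le hε (fun x => (hgrowth.le ht x).1)
    (integrable_gauss_sub_mul_one_add_norm_sq hε y) hK₂ hG
  have hh := integral_integral_norm_mul_Freg_le hε hC₀ (fun x => (hgrowth.le ht x).2.2)
    hint₁ hK₁ hG
  nlinarith [norm_nonneg y]

/-- uniform linear growth bound for the regularized coefficients. -/
theorem stmt4 (T : ℝ) (hT : 0 < T) (μ : Measure E) [SigmaFinite μ]
    (σ : ℝ → Vec d → Matrix (Fin d) (Fin d) ℝ) (b : ℝ → Vec d → Vec d)
    (h : ℝ → E → Vec d → Vec d) (C₀ : ℝ)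
    (hσmeas : MeasurableMat σ)
    (hbmeas : Measurable (Function.uncurry b))
    (hhmeas : Measurable fun p : ℝ × E × Vec d => h p.1 p.2.1 p.2.2)
    (hσpsd : ∀ t ∈ Icc (0:ℝ) T, ∀ x : Vec d, (σ t x).PosSemidef)
    (hgrowth : GrowthCond T μ σ b h C₀)
    (f : ℝ → Measure (Vec d))
    (hf : IsWeakSol T μ b (fun t x => σ t x * (σ t x)ᵀ) h f)
    (hfm : FinFirstMoments T f) :
    ∃ C > (0:ℝ), ∀ ε ∈ Ioo (0:ℝ) 1, ∀ y : Vec d, ∀ t ∈ Icc (0:ℝ) T,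
      ‖breg f b ε t y‖ + Real.sqrt ‖areg f (fun t x => σ t x * (σ t x)ᵀ) ε t y‖
        + (∫ x, ∫ z, ‖h t z x‖ * Freg f ε t x y ∂μ ∂(f t))
        ≤ C * (1 + ‖y‖) :=
  stmt4_general T hT μ σ b h C₀ hgrowth f hf hfm

end
end

section
/- Let (f_t)_{t∈[0,T]} be a measurable family of Borel probability measures on ℝ^d, let (E,𝓔,μ) be a σ-finite measure space and let A ∈ 𝓔 with μ(A) < ∞. Then for every set S in the product σ-algebra 𝓑([0,T]×ℝ^d) ⊗ 𝓔 and every ε > 0 there exists a measurable function φ : [0,T]×E×ℝ^d → ℝ such that (t,x) ↦ φ(t,z,x) is continuous on [0,T]×ℝ^d for each fixed z ∈ E, and ∫₀^T ∫_A ∫_{ℝ^d} | 1_S(t,z,x) − φ(t,z,x) | f_t(dx) μ(dz) dt < ε. -/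
open MeasureTheory Real Set Filter Matrix
open scoped BigOperators ENNReal Topology

noncomputable section

attribute [local instance] Matrix.normedAddCommGroup Matrix.normedSpace

variable {d : ℕ} {E : Type*} [MeasurableSpace E]

/-! Call a measurable set of `Z × X` approximable if its indicator is an `L¹(ν)`-limit of
measurable functions that are continuous in the `X`-variable. Approximable sets form an algebra
(use `1 - φ` and `max φ φ'`) containing the measurable rectangles, by density of continuous
functions in `L¹` of a finite measure on a metrizable space, and they are closed under
approximation in measure. A generating algebra is measure-dense for a finite measure, so every
measurable set is approximable. The theorem is the case `ν = μ|_A ⊗ (dt|_(0,T] ⊗ f_t)` on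
`E × (ℝ × ℝ^d)`. -/

section ApproxContinuousSnd

open scoped symmDiff

variable {Z X : Type*} [MeasurableSpace Z] [TopologicalSpace X] [MeasurableSpace X]
  (ν : Measure (Z × X))

def approxContinuousSndSets : Set (Set (Z × X)) :=
  {S | MeasurableSet S ∧ ∀ δ : ℝ≥0∞, 0 < δ → ∃ φ : Z × X → ℝ, Measurable φ ∧
    (∀ z, Continuous fun x => φ (z, x)) ∧ ∫⁻ p, ‖S.indicator 1 p - φ p‖ₑ ∂ν ≤ δ}

lemma empty_mem_approxContinuousSndSets : ∅ ∈ approxContinuousSndSets ν :=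
  ⟨MeasurableSet.empty, fun _ _ => ⟨0, measurable_const, fun _ => continuous_const, by simp⟩⟩

lemma compl_mem_approxContinuousSndSets {S : Set (Z × X)}
    (hS : S ∈ approxContinuousSndSets ν) : Sᶜ ∈ approxContinuousSndSets ν := by
  refine ⟨hS.1.compl, fun δ hδ => ?_⟩
  obtain ⟨φ, hφm, hφc, hφ⟩ := hS.2 δ hδ
  refine ⟨1 - φ, measurable_const.sub hφm, fun z => continuous_const.sub (hφc z), ?_⟩
  convert hφ using 3 with p
  rw [indicator_compl, ← enorm_neg]
  simp

lemma union_mem_approxContinuousSndSets {S S' : Set (Z × X)}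
    (hS : S ∈ approxContinuousSndSets ν) (hS' : S' ∈ approxContinuousSndSets ν) :
    S ∪ S' ∈ approxContinuousSndSets ν := by
  refine ⟨hS.1.union hS'.1, fun δ hδ => ?_⟩
  obtain ⟨φ, hφm, hφc, hφ⟩ := hS.2 (δ / 2) (ENNReal.half_pos hδ.ne')
  obtain ⟨φ', hφ'm, hφ'c, hφ'⟩ := hS'.2 (δ / 2) (ENNReal.half_pos hδ.ne')
  refine ⟨fun p => max (φ p) (φ' p), hφm.max hφ'm, fun z => (hφc z).max (hφ'c z), ?_⟩
  have hmax : ∀ p, (S ∪ S').indicator (1 : Z × X → ℝ) p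
      = max (S.indicator 1 p) (S'.indicator 1 p) := by
    intro p
    by_cases hp : p ∈ S <;> by_cases hp' : p ∈ S' <;> simp [hp, hp']
  calc ∫⁻ p, ‖(S ∪ S').indicator 1 p - max (φ p) (φ' p)‖ₑ ∂ν
      ≤ ∫⁻ p, (‖S.indicator 1 p - φ p‖ₑ + ‖S'.indicator 1 p - φ' p‖ₑ) ∂ν := by
        refine lintegral_mono fun p => ?_
        simp only [hmax, Real.enorm_eq_ofReal_abs]
        rw [← ENNReal.ofReal_add (abs_nonneg _) (abs_nonneg _)]
        exact ENNReal.ofReal_le_ofReal ((abs_max_sub_max_le_max _ _ _ _).trans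
          (max_le_add_of_nonneg (abs_nonneg _) (abs_nonneg _)))
    _ = ∫⁻ p, ‖S.indicator 1 p - φ p‖ₑ ∂ν + ∫⁻ p, ‖S'.indicator 1 p - φ' p‖ₑ ∂ν :=
        lintegral_add_left ((measurable_one.indicator hS.1).sub hφm).enorm _
    _ ≤ δ / 2 + δ / 2 := add_le_add hφ hφ'
    _ = δ := ENNReal.add_halves δ

lemma isSetAlgebra_approxContinuousSndSets : IsSetAlgebra (approxContinuousSndSets ν) :=
  ⟨empty_mem_approxContinuousSndSets ν, fun _ => compl_mem_approxContinuousSndSets ν,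
    fun _ _ => union_mem_approxContinuousSndSets ν⟩

lemma prod_mem_approxContinuousSndSets [TopologicalSpace.PseudoMetrizableSpace X]
    [BorelSpace X] [IsFiniteMeasure ν] {V : Set Z} {U : Set X} (hV : MeasurableSet V)
    (hU : MeasurableSet U) :
    V ×ˢ U ∈ approxContinuousSndSets ν := by
  refine ⟨hV.prod hU, fun δ hδ => ?_⟩
  obtain ⟨g, hg, -⟩ := ((integrable_const (1 : ℝ)).indicator hU
    (μ := ν.map Prod.snd)).exists_boundedContinuous_lintegral_sub_le hδ.ne'
  refine ⟨fun p => V.indicator 1 p.1 * g p.2,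
    ((measurable_one.indicator hV).comp measurable_fst).mul
      (g.continuous.measurable.comp measurable_snd),
    fun z => by fun_prop, ?_⟩
  calc ∫⁻ p, ‖(V ×ˢ U).indicator 1 p - V.indicator 1 p.1 * g p.2‖ₑ ∂ν
      ≤ ∫⁻ p, ‖U.indicator 1 p.2 - g p.2‖ₑ ∂ν := by
        refine lintegral_mono fun p => ?_
        rw [← Prod.mk.eta (p := p), indicator_prod_one, ← mul_sub, enorm_mul]
        by_cases hp : p.1 ∈ V <;> simp [hp]
    _ = ∫⁻ x, ‖U.indicator 1 x - g x‖ₑ ∂(ν.map Prod.snd) :=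
        (lintegral_map ((measurable_one.indicator hU).sub g.continuous.measurable).enorm
          measurable_snd).symm
    _ ≤ δ := hg

lemma mem_approxContinuousSndSets_of_forall_measure_symmDiff_lt {S : Set (Z × X)}
    (hS : MeasurableSet S)
    (h : ∀ η : ℝ≥0∞, 0 < η → ∃ S' ∈ approxContinuousSndSets ν, ν (S ∆ S') < η) :
    S ∈ approxContinuousSndSets ν := by
  refine ⟨hS, fun δ hδ => ?_⟩
  obtain ⟨S', hS', hSS'⟩ := h (δ / 2) (ENNReal.half_pos hδ.ne')
  obtain ⟨φ, hφm, hφc, hφ⟩ := hS'.2 (δ / 2) (ENNReal.half_pos hδ.ne')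
  refine ⟨φ, hφm, hφc, ?_⟩
  calc ∫⁻ p, ‖S.indicator 1 p - φ p‖ₑ ∂ν
      ≤ ∫⁻ p, ((S ∆ S').indicator 1 p + ‖S'.indicator 1 p - φ p‖ₑ) ∂ν := by
        refine lintegral_mono fun p => ?_
        calc ‖S.indicator 1 p - φ p‖ₑ
            ≤ ‖S.indicator (1 : Z × X → ℝ) p - S'.indicator 1 p‖ₑ + ‖S'.indicator 1 p - φ p‖ₑ := by
              simpa only [edist_eq_enorm_sub] using
                edist_triangle _ (S'.indicator (1 : Z × X → ℝ) p) _
          _ = _ := by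
              congr 1
              by_cases hp : p ∈ S <;> by_cases hp' : p ∈ S' <;> simp [hp, hp', symmDiff_def]
    _ = ν (S ∆ S') + ∫⁻ p, ‖S'.indicator 1 p - φ p‖ₑ ∂ν := by
        rw [lintegral_add_left (measurable_one.indicator (hS.symmDiff hS'.1)),
          lintegral_indicator_one (hS.symmDiff hS'.1)]
    _ ≤ δ / 2 + δ / 2 := add_le_add hSS'.le hφ
    _ = δ := ENNReal.add_halves δ

theorem MeasurableSet.mem_approxContinuousSndSets [TopologicalSpace.PseudoMetrizableSpace X]
    [BorelSpace X] [IsFiniteMeasure ν] {S : Set (Z × X)} (hS : MeasurableSet S) :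
    S ∈ approxContinuousSndSets ν := by
  have hgen : (inferInstance : MeasurableSpace (Z × X)) =
      MeasurableSpace.generateFrom (approxContinuousSndSets ν) := by
    refine le_antisymm ?_ (MeasurableSpace.generateFrom_le fun S hS => hS.1)
    rw [← generateFrom_prod]
    refine MeasurableSpace.generateFrom_mono ?_
    rintro _ ⟨V, hV, U, hU, rfl⟩
    exact prod_mem_approxContinuousSndSets ν hV hU
  have hdense := Measure.MeasureDense.of_generateFrom_isSetAlgebra_finite ν
    (isSetAlgebra_approxContinuousSndSets ν) hgen
  refine mem_approxContinuousSndSets_of_forall_measure_symmDiff_lt ν hS fun η hη => ?_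
  obtain ⟨r, -, hr, hrη⟩ := ENNReal.lt_iff_exists_real_btwn.1 hη
  obtain ⟨S', hS', hSS'⟩ := hdense.approx S hS (measure_ne_top ν S) r (ENNReal.ofReal_pos.1 hr)
  exact ⟨S', hS', hSS'.trans hrη⟩

end ApproxContinuousSnd

section Iterated

open ProbabilityTheory

variable {α β γ : Type*} [MeasurableSpace α] [MeasurableSpace β] [MeasurableSpace γ]

lemma integral_le_toReal_lintegral {μ : Measure α} {g : α → ℝ} {h : α → ℝ≥0∞}
    (hh : AEMeasurable h μ) (hfin : ∫⁻ a, h a ∂μ ≠ ∞) (hgh : ∀ᵐ a ∂μ, g a ≤ (h a).toReal) :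
    ∫ a, g a ∂μ ≤ (∫⁻ a, h a ∂μ).toReal := by
  by_cases hg : Integrable g μ
  · calc ∫ a, g a ∂μ ≤ ∫ a, (h a).toReal ∂μ :=
          integral_mono_ae hg (integrable_toReal_of_lintegral_ne_top hh hfin) hgh
      _ = (∫⁻ a, h a ∂μ).toReal := integral_toReal hh (ae_lt_top' hh hfin)
  · rw [integral_undef hg]
    exact ENNReal.toReal_nonneg

lemma integral_integral_integral_le_toReal_lintegral {ρ : Measure α} {m : Measure β} [SFinite m]
    (κ : Kernel α γ) [IsSFiniteKernel κ]
    {G : α → β → γ → ℝ} (hG0 : ∀ a b c, 0 ≤ G a b c)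
    (hGm : Measurable fun p : α × β × γ => G p.1 p.2.1 p.2.2)
    (hfin : ∫⁻ a, ∫⁻ b, ∫⁻ c, ENNReal.ofReal (G a b c) ∂κ a ∂m ∂ρ ≠ ∞) :
    ∫ a, ∫ b, ∫ c, G a b c ∂κ a ∂m ∂ρ
      ≤ (∫⁻ a, ∫⁻ b, ∫⁻ c, ENNReal.ofReal (G a b c) ∂κ a ∂m ∂ρ).toReal := by
  have hH : Measurable fun q : α × β => ∫⁻ c, ENNReal.ofReal (G q.1 q.2 c) ∂κ q.1 :=
    Measurable.lintegral_kernel_prod_right (κ := κ.prodMkRight β)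
      (f := fun q c => ENNReal.ofReal (G q.1 q.2 c))
      (hGm.ennreal_ofReal.comp
        (measurable_fst.fst.prodMk (measurable_fst.snd.prodMk measurable_snd)))
  have hM : Measurable fun a => ∫⁻ b, ∫⁻ c, ENNReal.ofReal (G a b c) ∂κ a ∂m :=
    hH.lintegral_prod_right'
  refine integral_le_toReal_lintegral hM.aemeasurable hfin ?_
  filter_upwards [ae_lt_top hM hfin] with a ha
  refine integral_le_toReal_lintegral (hH.comp measurable_prodMk_left).aemeasurable ha.ne
    (ae_of_all _ fun b => ?_)
  have hGab : Measurable (G a b) :=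
    hGm.comp (measurable_const.prodMk (measurable_const.prodMk measurable_id))
  exact (integral_eq_lintegral_of_nonneg_ae (ae_of_all _ (hG0 a b))
    hGab.aestronglyMeasurable).le

lemma lintegral_prod_compProd {m : Measure β} [SFinite m] {ρ : Measure α} [SFinite ρ]
    (κ : Kernel α γ) [IsSFiniteKernel κ]
    {F : β × α × γ → ℝ≥0∞} (hF : Measurable F) :
    ∫⁻ p, F p ∂(m.prod (ρ.compProd κ)) = ∫⁻ a, ∫⁻ b, ∫⁻ c, F (b, a, c) ∂κ a ∂m ∂ρ := by
  calc ∫⁻ p, F p ∂(m.prod (ρ.compProd κ)) = ∫⁻ b, ∫⁻ q, F (b, q) ∂(ρ.compProd κ) ∂m :=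
        lintegral_prod _ hF.aemeasurable
    _ = ∫⁻ b, ∫⁻ a, ∫⁻ c, F (b, a, c) ∂κ a ∂ρ ∂m :=
        lintegral_congr fun b => Measure.lintegral_compProd (hF.comp measurable_prodMk_left)
    _ = ∫⁻ a, ∫⁻ b, ∫⁻ c, F (b, a, c) ∂κ a ∂m ∂ρ :=
        lintegral_lintegral_swap (Measurable.lintegral_kernel_prod_right (κ := κ.prodMkLeft β)
          (f := fun q c => F (q.1, q.2, c))
          (hF.comp (measurable_fst.fst.prodMk
            (measurable_fst.snd.prodMk measurable_snd)))).aemeasurable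

end Iterated

namespace MeasFamily

open ProbabilityTheory

variable {T : ℝ} {f : ℝ → Measure (Vec d)}

def toKernel (hf : MeasFamily T f) (hT : 0 ≤ T) : Kernel ℝ (Vec d) where
  toFun t := f (projIcc 0 T hT t)
  measurable' := Measure.measurable_of_measurable_coe _ fun s hs =>
    (hf s hs).comp continuous_projIcc.measurable

lemma toKernel_apply_of_mem (hf : MeasFamily T f) (hT : 0 ≤ T) {t : ℝ} (ht : t ∈ Icc 0 T) :
    hf.toKernel hT t = f t := by
  simp [toKernel, projIcc_of_mem hT ht]

lemma isMarkovKernel_toKernel (hf : MeasFamily T f) (hT : 0 ≤ T)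
    (hprob : ∀ t ∈ Icc 0 T, IsProbabilityMeasure (f t)) : IsMarkovKernel (hf.toKernel hT) :=
  ⟨fun t => hprob _ (projIcc 0 T hT t).2⟩

end MeasFamily

theorem stmt15_general {d : ℕ} {E : Type*} [MeasurableSpace E] (μ : Measure E)
    (T : ℝ) (hT : 0 < T)
    (f : ℝ → Measure (Vec d)) (hfmeas : MeasFamily T f)
    (hfprob : ∀ t ∈ Icc (0:ℝ) T, IsProbabilityMeasure (f t))
    (A : Set E) (hAfin : μ A < ⊤)
    (S : Set (ℝ × E × Vec d)) (hS : MeasurableSet S) (ε : ℝ) (hε : 0 < ε) :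
    ∃ φ : ℝ → E → Vec d → ℝ,
      (Measurable fun p : ℝ × E × Vec d => φ p.1 p.2.1 p.2.2) ∧
      (∀ z : E, Continuous fun p : ℝ × Vec d => φ p.1 z p.2) ∧
      (∫ t in (0:ℝ)..T, ∫ z in A, ∫ x,
          |S.indicator (fun _ => (1:ℝ)) (t, z, x) - φ t z x| ∂(f t) ∂μ) < ε := by
  let κ := hfmeas.toKernel hT.le
  have := hfmeas.isMarkovKernel_toKernel hT.le hfprob
  have : IsFiniteMeasure (μ.restrict A) := isFiniteMeasure_restrict.2 hAfin.ne
  let ν := (μ.restrict A).prod ((volume.restrict (Ioc 0 T)).compProd κ)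
  have hswap : Measurable fun q : E × ℝ × Vec d => (q.2.1, q.1, q.2.2) := by fun_prop
  obtain ⟨ψ, hψm, hψc, hψ⟩ := ((hS.preimage hswap).mem_approxContinuousSndSets ν).2
    (ENNReal.ofReal ε / 2) (ENNReal.half_pos (ENNReal.ofReal_pos.2 hε).ne')
  refine ⟨fun t z x => ψ (z, t, x), hψm.comp (by fun_prop), hψc, ?_⟩
  have hGm : Measurable fun p : ℝ × E × Vec d => |S.indicator 1 p - ψ (p.2.1, p.1, p.2.2)| :=
    ((measurable_one.indicator hS).sub (hψm.comp (by fun_prop))).abs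
  have hlt : ∫⁻ t in Ioc 0 T, ∫⁻ z in A, ∫⁻ x,
      ENNReal.ofReal |S.indicator 1 (t, z, x) - ψ (z, t, x)| ∂κ t ∂μ < ENNReal.ofReal ε := by
    calc _ = ∫⁻ p, ‖(_ ⁻¹' S).indicator 1 p - ψ p‖ₑ ∂ν := by
          simp only [Real.enorm_eq_ofReal_abs]
          exact (lintegral_prod_compProd κ
            ((measurable_one.indicator (hS.preimage hswap)).sub hψm).abs.ennreal_ofReal).symm
      _ ≤ ENNReal.ofReal ε / 2 := hψ
      _ < ENNReal.ofReal ε :=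
          ENNReal.half_lt_self (ENNReal.ofReal_pos.2 hε).ne' ENNReal.ofReal_ne_top
  calc _ = ∫ t in Ioc 0 T, ∫ z in A, ∫ x, |S.indicator 1 (t, z, x) - ψ (z, t, x)| ∂κ t ∂μ := by
        rw [intervalIntegral.integral_of_le hT.le]
        refine setIntegral_congr_fun measurableSet_Ioc fun t ht => ?_
        rw [hfmeas.toKernel_apply_of_mem hT.le (Ioc_subset_Icc_self ht)]
        rfl
    _ ≤ _ := integral_integral_integral_le_toReal_lintegral κ (fun _ _ _ => abs_nonneg _)
          hGm hlt.ne_top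
    _ < ε := ENNReal.toReal_lt_of_lt_ofReal hlt

/-- approximation of indicators of product-measurable sets by functions
which are continuous in `(t,x)`, in `L¹(f_t(dx) μ|_A(dz) dt)`. -/
theorem stmt15 {d : ℕ} {E : Type*} [MeasurableSpace E] (μ : Measure E) [SigmaFinite μ]
    (T : ℝ) (hT : 0 < T)
    (f : ℝ → Measure (Vec d)) (hfmeas : MeasFamily T f)
    (hfprob : ∀ t ∈ Icc (0:ℝ) T, IsProbabilityMeasure (f t))
    (A : Set E) (hA : MeasurableSet A) (hAfin : μ A < ⊤)
    (S : Set (ℝ × E × Vec d)) (hS : MeasurableSet S) (ε : ℝ) (hε : 0 < ε) :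
    ∃ φ : ℝ → E → Vec d → ℝ,
      (Measurable fun p : ℝ × E × Vec d => φ p.1 p.2.1 p.2.2) ∧
      (∀ z : E, Continuous fun p : ℝ × Vec d => φ p.1 z p.2) ∧
      (∫ t in (0:ℝ)..T, ∫ z in A, ∫ x,
          |S.indicator (fun _ => (1:ℝ)) (t, z, x) - φ t z x| ∂(f t) ∂μ) < ε :=
  stmt15_general μ T hT f hfmeas hfprob A hAfin S hS ε hε
end
end
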